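/- With notation as in the Lemma on the signed area density (λ proportional to (σ₁,p)(σ₂,p)): a point x ∈ Σ is a singular point of the spaceform projection f if and only if s₁(x) ⊥ p or s₂(x) ⊥ p. Moreover if s₁(x) ⊥ p, then for any X ∈ Γ T₁ one has d_X f = 0 at every singular point near x, i.e. X restricts to a null vector field of f. -/

import Mathlib

/-- The bilinear form of signature (-,+,+,+,+,-) on ℝ^{4,2} = ℝ⁶. -/
noncomputable def Bf (X Y : Fin 6 → ℝ) : ℝ :=
  -(X 0 * Y 0) + X 1 * Y 1 + X 2 * Y 2 + X 3 * Y 3 + X 4 * Y 4 - X 5 * Y 5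

noncomputable def pvec : Fin 6 → ℝ := ![0,0,0,0,0,1]
noncomputable def qvec : Fin 6 → ℝ := ![1,-1,0,0,0,0]

/-- Determinant of three column vectors in ℝ³. -/
noncomputable def det3 (c1 c2 c3 : Fin 3 → ℝ) : ℝ :=
  Matrix.det (Matrix.of fun i j => ![c1, c2, c3] j i)

/-- The Euclidean projection of the point sphere map F. -/
noncomputable def euc (F : (ℝ × ℝ) → (Fin 6 → ℝ)) : (ℝ × ℝ) → (Fin 3 → ℝ) :=
  fun x => ![F x 2, F x 3, F x 4]

lemma Bf_p (v : Fin 6 → ℝ) : Bf v pvec = -v 5 := by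
  have h0 : pvec 0 = 0 := rfl
  have h1 : pvec 1 = 0 := rfl
  have h2 : pvec 2 = 0 := rfl
  have h3 : pvec 3 = 0 := rfl
  have h4 : pvec 4 = 0 := rfl
  have h5 : pvec 5 = 1 := rfl
  rw [Bf, h0, h1, h2, h3, h4, h5]; ring

lemma Bf_q (v : Fin 6 → ℝ) : Bf v qvec = -v 0 - v 1 := by
  have h0 : qvec 0 = 1 := rfl
  have h1 : qvec 1 = -1 := rfl
  have h2 : qvec 2 = 0 := rfl
  have h3 : qvec 3 = 0 := rfl
  have h4 : qvec 4 = 0 := rfl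
  have h5 : qvec 5 = 0 := rfl
  rw [Bf, h0, h1, h2, h3, h4, h5]; ring

lemma Bf_comb (a b : ℝ) (u w Z : Fin 6 → ℝ) :
    Bf (a • u + b • w) Z = a * Bf u Z + b * Bf w Z := by
  simp [Bf, Pi.add_apply, Pi.smul_apply, smul_eq_mul]; ring

/-- denominator -/
noncomputable def Dl (σ₁ σ₂ : (ℝ × ℝ) → Fin 6 → ℝ) (z : ℝ × ℝ) : ℝ :=
  Bf (σ₁ z) pvec * Bf (σ₂ z) qvec - Bf (σ₂ z) pvec * Bf (σ₁ z) qvec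

/-- Cramer coefficients -/
noncomputable def crC (σ₁ σ₂ g : (ℝ × ℝ) → Fin 6 → ℝ) (z : ℝ × ℝ) : ℝ :=
  (Bf (g z) pvec * Bf (σ₂ z) qvec - Bf (σ₂ z) pvec * Bf (g z) qvec) / Dl σ₁ σ₂ z

noncomputable def crD (σ₁ σ₂ g : (ℝ × ℝ) → Fin 6 → ℝ) (z : ℝ × ℝ) : ℝ :=
  (Bf (σ₁ z) pvec * Bf (g z) qvec - Bf (g z) pvec * Bf (σ₁ z) qvec) / Dl σ₁ σ₂ z

lemma repr_lemma (σ₁ σ₂ g : (ℝ × ℝ) → Fin 6 → ℝ) (z : ℝ × ℝ)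
    (hΔ : Dl σ₁ σ₂ z ≠ 0) (hmem : g z ∈ Submodule.span ℝ {σ₁ z, σ₂ z}) :
    g z = crC σ₁ σ₂ g z • σ₁ z + crD σ₁ σ₂ g z • σ₂ z := by
  obtain ⟨c, d, hcd⟩ := Submodule.mem_span_pair.mp hmem
  have hp : Bf (g z) pvec = c * Bf (σ₁ z) pvec + d * Bf (σ₂ z) pvec := by
    rw [← hcd, Bf_comb]
  have hq : Bf (g z) qvec = c * Bf (σ₁ z) qvec + d * Bf (σ₂ z) qvec := by
    rw [← hcd, Bf_comb]
  have hc : crC σ₁ σ₂ g z = c := by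
    rw [crC, div_eq_iff hΔ, Dl]; linear_combination Bf (σ₂ z) qvec * hp - Bf (σ₂ z) pvec * hq
  have hd : crD σ₁ σ₂ g z = d := by
    rw [crD, div_eq_iff hΔ, Dl]; linear_combination Bf (σ₁ z) pvec * hq - Bf (σ₁ z) qvec * hp
  rw [hc, hd, hcd]

lemma comp_fd (g : (ℝ × ℝ) → Fin 6 → ℝ) (z : ℝ × ℝ) (hg : DifferentiableAt ℝ g z)
    (j : Fin 6) : fderiv ℝ (fun w => g w j) z = (ContinuousLinearMap.proj j).comp (fderiv ℝ g z) := by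
  have h := (ContinuousLinearMap.proj (R := ℝ) (φ := fun _ : Fin 6 => ℝ) j).hasFDerivAt.comp z
    hg.hasFDerivAt
  exact h.fderiv

lemma comp_fd' (g : (ℝ × ℝ) → Fin 6 → ℝ) (z : ℝ × ℝ) (hg : DifferentiableAt ℝ g z)
    (j : Fin 6) (V : ℝ × ℝ) : fderiv ℝ (fun w => g w j) z V = fderiv ℝ g z V j := by
  rw [comp_fd g z hg j]; rfl

lemma diff_comp (g : (ℝ × ℝ) → Fin 6 → ℝ) (z : ℝ × ℝ) (hg : DifferentiableAt ℝ g z)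
    (j : Fin 6) : DifferentiableAt ℝ (fun w => g w j) z :=
  ((ContinuousLinearMap.proj (R := ℝ) (φ := fun _ : Fin 6 => ℝ) j).differentiable.differentiableAt).comp z hg

lemma diff_Bfp (g : (ℝ × ℝ) → Fin 6 → ℝ) (z : ℝ × ℝ) (hg : DifferentiableAt ℝ g z) :
    DifferentiableAt ℝ (fun w => Bf (g w) pvec) z := by
  have : (fun w => Bf (g w) pvec) = fun w => -(g w 5) := by
    funext w; rw [Bf_p]
  rw [this]; exact (diff_comp g z hg 5).neg

lemma diff_Bfq (g : (ℝ × ℝ) → Fin 6 → ℝ) (z : ℝ × ℝ) (hg : DifferentiableAt ℝ g z) :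
    DifferentiableAt ℝ (fun w => Bf (g w) qvec) z := by
  have : (fun w => Bf (g w) qvec) = fun w => -(g w 0) - g w 1 := by
    funext w; rw [Bf_q]
  rw [this]; exact ((diff_comp g z hg 0).neg).sub (diff_comp g z hg 1)

lemma diff_Dl (σ₁ σ₂ : (ℝ × ℝ) → Fin 6 → ℝ) (z : ℝ × ℝ)
    (h1 : DifferentiableAt ℝ σ₁ z) (h2 : DifferentiableAt ℝ σ₂ z) :
    DifferentiableAt ℝ (Dl σ₁ σ₂) z :=
  ((diff_Bfp σ₁ z h1).mul (diff_Bfq σ₂ z h2)).sub ((diff_Bfp σ₂ z h2).mul (diff_Bfq σ₁ z h1))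

lemma diff_crC (σ₁ σ₂ g : (ℝ × ℝ) → Fin 6 → ℝ) (z : ℝ × ℝ)
    (h1 : DifferentiableAt ℝ σ₁ z) (h2 : DifferentiableAt ℝ σ₂ z)
    (hg : DifferentiableAt ℝ g z) (hΔ : Dl σ₁ σ₂ z ≠ 0) :
    DifferentiableAt ℝ (crC σ₁ σ₂ g) z := by
  unfold crC
  simp only [div_eq_mul_inv]
  exact (((diff_Bfp g z hg).mul (diff_Bfq σ₂ z h2)).sub
      ((diff_Bfp σ₂ z h2).mul (diff_Bfq g z hg))).mul ((diff_Dl σ₁ σ₂ z h1 h2).inv hΔ)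

lemma diff_crD (σ₁ σ₂ g : (ℝ × ℝ) → Fin 6 → ℝ) (z : ℝ × ℝ)
    (h1 : DifferentiableAt ℝ σ₁ z) (h2 : DifferentiableAt ℝ σ₂ z)
    (hg : DifferentiableAt ℝ g z) (hΔ : Dl σ₁ σ₂ z ≠ 0) :
    DifferentiableAt ℝ (crD σ₁ σ₂ g) z := by
  unfold crD
  simp only [div_eq_mul_inv]
  exact (((diff_Bfp σ₁ z h1).mul (diff_Bfq g z hg)).sub
      ((diff_Bfp g z hg).mul (diff_Bfq σ₁ z h1))).mul ((diff_Dl σ₁ σ₂ z h1 h2).inv hΔ)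

lemma dsmul (σ₁ σ₂ : (ℝ × ℝ) → Fin 6 → ℝ) (c d : (ℝ × ℝ) → ℝ) (z : ℝ × ℝ)
    (h1 : DifferentiableAt ℝ σ₁ z) (h2 : DifferentiableAt ℝ σ₂ z)
    (hc : DifferentiableAt ℝ c z) (hd : DifferentiableAt ℝ d z) (V : ℝ × ℝ) :
    fderiv ℝ (fun w => c w • σ₁ w + d w • σ₂ w) z V =
      fderiv ℝ c z V • σ₁ z + fderiv ℝ d z V • σ₂ z +
      c z • fderiv ℝ σ₁ z V + d z • fderiv ℝ σ₂ z V := by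
  have h := (hc.hasFDerivAt.smul h1.hasFDerivAt).add (hd.hasFDerivAt.smul h2.hasFDerivAt)
  rw [HasFDerivAt.fderiv (f := fun w => c w • σ₁ w + d w • σ₂ w) h]
  simp [ContinuousLinearMap.add_apply, ContinuousLinearMap.smul_apply,
    ContinuousLinearMap.smulRight_apply]
  module

lemma fderiv_repr (Ω : Set (ℝ × ℝ)) (hΩ : IsOpen Ω) (σ₁ σ₂ g : (ℝ × ℝ) → Fin 6 → ℝ)
    (y : ℝ × ℝ) (hy : y ∈ Ω)
    (h1 : DifferentiableAt ℝ σ₁ y) (h2 : DifferentiableAt ℝ σ₂ y)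
    (hgd : DifferentiableAt ℝ g y)
    (hΔ : ∀ z ∈ Ω, Dl σ₁ σ₂ z ≠ 0)
    (hg : ∀ z ∈ Ω, g z ∈ Submodule.span ℝ {σ₁ z, σ₂ z}) (V : ℝ × ℝ) :
    fderiv ℝ g y V = fderiv ℝ (crC σ₁ σ₂ g) y V • σ₁ y + fderiv ℝ (crD σ₁ σ₂ g) y V • σ₂ y +
      crC σ₁ σ₂ g y • fderiv ℝ σ₁ y V + crD σ₁ σ₂ g y • fderiv ℝ σ₂ y V := by
  have heq : g =ᶠ[nhds y] fun w => crC σ₁ σ₂ g w • σ₁ w + crD σ₁ σ₂ g w • σ₂ w := by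
    filter_upwards [hΩ.mem_nhds hy] with z hz
    exact repr_lemma σ₁ σ₂ g z (hΔ z hz) (hg z hz)
  rw [heq.fderiv_eq,
    dsmul σ₁ σ₂ _ _ y h1 h2 (diff_crC σ₁ σ₂ g y h1 h2 hgd (hΔ y hy))
      (diff_crD σ₁ σ₂ g y h1 h2 hgd (hΔ y hy)) V]

lemma ker_lemma (σ₁ σ₂ : (ℝ × ℝ) → Fin 6 → ℝ) (z : ℝ × ℝ) (hΔ : Dl σ₁ σ₂ z ≠ 0)
    (v : Fin 6 → ℝ) (hv : v ∈ Submodule.span ℝ {σ₁ z, σ₂ z})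
    (h5 : Bf v pvec = 0) (h01 : Bf v qvec = 0) : v = 0 := by
  obtain ⟨c, d, hcd⟩ := Submodule.mem_span_pair.mp hv
  have hp : (0:ℝ) = c * Bf (σ₁ z) pvec + d * Bf (σ₂ z) pvec := by
    rw [← h5, ← hcd, Bf_comb]
  have hq : (0:ℝ) = c * Bf (σ₁ z) qvec + d * Bf (σ₂ z) qvec := by
    rw [← h01, ← hcd, Bf_comb]
  have hc : c * Dl σ₁ σ₂ z = 0 := by
    rw [Dl]; linear_combination Bf (σ₂ z) qvec * hp.symm - Bf (σ₂ z) pvec * hq.symm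
  have hd : d * Dl σ₁ σ₂ z = 0 := by
    rw [Dl]; linear_combination Bf (σ₁ z) pvec * hq.symm - Bf (σ₁ z) qvec * hp.symm
  have hc0 : c = 0 := by rcases mul_eq_zero.mp hc with h | h; exact h; exact absurd h hΔ
  have hd0 : d = 0 := by rcases mul_eq_zero.mp hd with h | h; exact h; exact absurd h hΔ
  rw [← hcd, hc0, hd0]; simp

lemma uniq_coeff (u w : Fin 6 → ℝ) (h : LinearIndependent ℝ ![u, w]) (c₁ d₁ c₂ d₂ : ℝ)
    (heq : c₁ • u + d₁ • w = c₂ • u + d₂ • w) : c₁ = c₂ ∧ d₁ = d₂ := by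
  have h0 : (c₁ - c₂) • u + (d₁ - d₂) • w = 0 := by
    rw [sub_smul, sub_smul]
    rw [← sub_eq_zero] at heq
    rw [← heq]; abel
  have hz := Fintype.linearIndependent_iff.mp h ![c₁ - c₂, d₁ - d₂] (by
    simpa [Fin.sum_univ_two] using h0)
  constructor
  · have := hz 0; simp at this; linarith
  · have := hz 1; simp at this; linarith

noncomputable def Emap : (Fin 6 → ℝ) →L[ℝ] (Fin 3 → ℝ) :=
  ContinuousLinearMap.pi ![ContinuousLinearMap.proj 2, ContinuousLinearMap.proj 3,
    ContinuousLinearMap.proj 4]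

lemma Emap_apply (v : Fin 6 → ℝ) : Emap v = ![v 2, v 3, v 4] := by
  funext i; fin_cases i <;> rfl

lemma euc_Emap (F : (ℝ × ℝ) → Fin 6 → ℝ) : euc F = fun z => Emap (F z) := by
  funext z; rw [Emap_apply]; rfl

theorem stmt13 (Ω : Set (ℝ × ℝ)) (hΩ : IsOpen Ω)
    (σ₁ σ₂ F T : (ℝ × ℝ) → (Fin 6 → ℝ)) (X Y : (ℝ × ℝ) → ℝ × ℝ)
    (hσ₁ : ContDiffOn ℝ (⊤ : ℕ∞) σ₁ Ω) (hσ₂ : ContDiffOn ℝ (⊤ : ℕ∞) σ₂ Ω)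
    (hFs : ContDiffOn ℝ (⊤ : ℕ∞) F Ω) (hTs : ContDiffOn ℝ (⊤ : ℕ∞) T Ω)
    (hXs : ContDiffOn ℝ (⊤ : ℕ∞) X Ω) (hYs : ContDiffOn ℝ (⊤ : ℕ∞) Y Ω)
    -- F and T are the spaceform projection and tangent plane congruence of 𝓕
    (hspan : ∀ y ∈ Ω, Submodule.span ℝ {F y, T y} = Submodule.span ℝ {σ₁ y, σ₂ y})
    (hFp : ∀ y ∈ Ω, Bf (F y) pvec = 0) (hFq : ∀ y ∈ Ω, Bf (F y) qvec = -1)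
    (hTp : ∀ y ∈ Ω, Bf (T y) pvec = -1) (hTq : ∀ y ∈ Ω, Bf (T y) qvec = 0)
    -- 𝓕 is totally null
    (hFF : ∀ y ∈ Ω, Bf (F y) (F y) = 0) (hTT : ∀ y ∈ Ω, Bf (T y) (T y) = 0)
    (hFT : ∀ y ∈ Ω, Bf (F y) (T y) = 0)
    -- σ₁, σ₂ are pointwise independent lifts of the curvature spheres
    (hind : ∀ y ∈ Ω, LinearIndependent ℝ ![σ₁ y, σ₂ y])
    -- isotropy (Legendre condition)
    (hiso : ∀ y ∈ Ω, ∀ V : ℝ × ℝ, Bf (fderiv ℝ σ₁ y V) (σ₂ y) = 0)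
    -- curvature sphere conditions with curvature directions X for s₁ and Y for s₂
    (hc1 : ∀ y ∈ Ω, fderiv ℝ σ₁ y (X y) ∈ Submodule.span ℝ {σ₁ y, σ₂ y})
    (hc2 : ∀ y ∈ Ω, fderiv ℝ σ₂ y (Y y) ∈ Submodule.span ℝ {σ₁ y, σ₂ y})
    (hXY : ∀ y ∈ Ω, LinearIndependent ℝ ![X y, Y y])
    -- the matrix B of pairings against p and q is invertible
    (hdetB : ∀ y ∈ Ω,
      Matrix.det !![Bf (σ₁ y) pvec, Bf (σ₂ y) pvec;
                    Bf (σ₁ y) qvec, Bf (σ₂ y) qvec] ≠ 0)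
    -- umbilic-free: the only curvature spheres at each point are s₁ and s₂
    (humb : ∀ y ∈ Ω, ∀ v : Fin 6 → ℝ, v ∈ Submodule.span ℝ {σ₁ y, σ₂ y} → v ≠ 0 →
      (∃ V : ℝ × ℝ, V ≠ 0 ∧ ∀ σ : (ℝ × ℝ) → (Fin 6 → ℝ), ContDiffOn ℝ (⊤ : ℕ∞) σ Ω →
        (∀ z ∈ Ω, σ z ∈ Submodule.span ℝ {σ₁ z, σ₂ z}) →
        σ y ∈ Submodule.span ℝ {v} →
        fderiv ℝ σ y V ∈ Submodule.span ℝ {σ₁ y, σ₂ y}) →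
      (v ∈ Submodule.span ℝ {σ₁ y} ∨ v ∈ Submodule.span ℝ {σ₂ y})) :
    (∀ y ∈ Ω, (¬ Function.Injective (fderiv ℝ (euc F) y)
      ↔ (Bf (σ₁ y) pvec = 0 ∨ Bf (σ₂ y) pvec = 0))) ∧
    (∀ y ∈ Ω, Bf (σ₁ y) pvec = 0 → fderiv ℝ (euc F) y (X y) = 0) := by
  have hΔ : ∀ z ∈ Ω, Dl σ₁ σ₂ z ≠ 0 := by
    intro z hz
    have h := hdetB z hz
    rw [Matrix.det_fin_two_of] at h
    exact h
  have hd1 : ∀ z ∈ Ω, DifferentiableAt ℝ σ₁ z := fun z hz =>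
    (hσ₁.contDiffAt (hΩ.mem_nhds hz)).differentiableAt (by simp)
  have hd2 : ∀ z ∈ Ω, DifferentiableAt ℝ σ₂ z := fun z hz =>
    (hσ₂.contDiffAt (hΩ.mem_nhds hz)).differentiableAt (by simp)
  have hdF : ∀ z ∈ Ω, DifferentiableAt ℝ F z := fun z hz =>
    (hFs.contDiffAt (hΩ.mem_nhds hz)).differentiableAt (by simp)
  have hFmem : ∀ z ∈ Ω, F z ∈ Submodule.span ℝ {σ₁ z, σ₂ z} := by
    intro z hz
    rw [← hspan z hz]
    exact Submodule.subset_span (Set.mem_insert _ _)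
  have hA : ∀ z ∈ Ω, crC σ₁ σ₂ F z = Bf (σ₂ z) pvec / Dl σ₁ σ₂ z := by
    intro z hz; rw [crC, hFp z hz, hFq z hz]; ring
  have hB : ∀ z ∈ Ω, crD σ₁ σ₂ F z = -Bf (σ₁ z) pvec / Dl σ₁ σ₂ z := by
    intro z hz; rw [crD, hFp z hz, hFq z hz]; ring
  have hw5 : ∀ y ∈ Ω, ∀ V : ℝ × ℝ, fderiv ℝ F y V 5 = 0 := by
    intro y hy V
    rw [← comp_fd' F y (hdF y hy) 5 V]
    have he : (fun w => F w 5) =ᶠ[nhds y] fun _ => (0:ℝ) := by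
      filter_upwards [hΩ.mem_nhds hy] with z hz
      have := hFp z hz; rw [Bf_p] at this; linarith
    rw [he.fderiv_eq]; simp
  have hw01 : ∀ y ∈ Ω, ∀ V : ℝ × ℝ, fderiv ℝ F y V 0 + fderiv ℝ F y V 1 = 0 := by
    intro y hy V
    have he : (fun w => F w 0 + F w 1) =ᶠ[nhds y] fun _ => (1:ℝ) := by
      filter_upwards [hΩ.mem_nhds hy] with z hz
      have := hFq z hz; rw [Bf_q] at this; linarith
    have hsum : fderiv ℝ (fun w => F w 0 + F w 1) y V =
        fderiv ℝ F y V 0 + fderiv ℝ F y V 1 := by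
      rw [fderiv_fun_add (diff_comp F y (hdF y hy) 0) (diff_comp F y (hdF y hy) 1),
        ContinuousLinearMap.add_apply, comp_fd' F y (hdF y hy) 0 V,
        comp_fd' F y (hdF y hy) 1 V]
    rw [← hsum, he.fderiv_eq]; simp
  have hpair : ∀ y ∈ Ω, ∀ V : ℝ × ℝ,
      Bf (fderiv ℝ F y V) pvec = 0 ∧ Bf (fderiv ℝ F y V) qvec = 0 := by
    intro y hy V
    constructor
    · rw [Bf_p, hw5 y hy V]; ring
    · rw [Bf_q]; have := hw01 y hy V; linarith
  have key0 : ∀ y ∈ Ω, ∀ V : ℝ × ℝ,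
      fderiv ℝ F y V ∈ Submodule.span ℝ {σ₁ y, σ₂ y} → fderiv ℝ F y V = 0 := by
    intro y hy V hmem
    exact ker_lemma σ₁ σ₂ y (hΔ y hy) _ hmem (hpair y hy V).1 (hpair y hy V).2
  have m1 : ∀ z : ℝ × ℝ, σ₁ z ∈ Submodule.span ℝ {σ₁ z, σ₂ z} := fun z =>
    Submodule.subset_span (Set.mem_insert _ _)
  have m2 : ∀ z : ℝ × ℝ, σ₂ z ∈ Submodule.span ℝ {σ₁ z, σ₂ z} := fun z =>
    Submodule.subset_span (Set.mem_insert_of_mem _ rfl)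
  have keyX : ∀ y ∈ Ω, Bf (σ₁ y) pvec = 0 → fderiv ℝ F y (X y) = 0 := by
    intro y hy hp1
    have hrep := fderiv_repr Ω hΩ σ₁ σ₂ F y hy (hd1 y hy) (hd2 y hy) (hdF y hy) hΔ hFmem (X y)
    have hB0 : crD σ₁ σ₂ F y = 0 := by rw [hB y hy, hp1]; ring
    apply key0 y hy
    rw [hrep, hB0, zero_smul, add_zero]
    exact Submodule.add_mem _ (Submodule.add_mem _
      (Submodule.smul_mem _ _ (m1 y)) (Submodule.smul_mem _ _ (m2 y)))
      (Submodule.smul_mem _ _ (hc1 y hy))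
  have keyY : ∀ y ∈ Ω, Bf (σ₂ y) pvec = 0 → fderiv ℝ F y (Y y) = 0 := by
    intro y hy hp2
    have hrep := fderiv_repr Ω hΩ σ₁ σ₂ F y hy (hd1 y hy) (hd2 y hy) (hdF y hy) hΔ hFmem (Y y)
    have hA0 : crC σ₁ σ₂ F y = 0 := by rw [hA y hy, hp2, zero_div]
    apply key0 y hy
    rw [hrep, hA0, zero_smul, add_zero]
    exact Submodule.add_mem _ (Submodule.add_mem _
      (Submodule.smul_mem _ _ (m1 y)) (Submodule.smul_mem _ _ (m2 y)))
      (Submodule.smul_mem _ _ (hc2 y hy))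
  have heuc : ∀ y ∈ Ω, fderiv ℝ (euc F) y = Emap.comp (fderiv ℝ F y) := by
    intro y hy
    rw [euc_Emap F]
    exact (Emap.hasFDerivAt.comp y (hdF y hy).hasFDerivAt).fderiv
  constructor
  · intro y hy
    constructor
    · -- forward direction
      intro hninj
      obtain ⟨a, b, hab, hne⟩ := Function.not_injective_iff.mp hninj
      set V := a - b with hVdef
      have hV0 : V ≠ 0 := sub_ne_zero.mpr hne
      have hLV : fderiv ℝ (euc F) y V = 0 := by rw [map_sub, hab, sub_self]
      have hEw : Emap (fderiv ℝ F y V) = 0 := by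
        rw [heuc y hy] at hLV; exact hLV
      rw [Emap_apply] at hEw
      have hw2 : fderiv ℝ F y V 2 = 0 := by have := congrFun hEw 0; simpa using this
      have hw3 : fderiv ℝ F y V 3 = 0 := by have := congrFun hEw 1; simpa using this
      have hw4 : fderiv ℝ F y V 4 = 0 := by have := congrFun hEw 2; simpa using this
      have hsq : (fun w => F w 0 - F w 1) =ᶠ[nhds y]
          fun w => F w 2 * F w 2 + F w 3 * F w 3 + F w 4 * F w 4 := by
        filter_upwards [hΩ.mem_nhds hy] with z hz
        have h1 := hFF z hz; rw [Bf] at h1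
        have h2 := hFp z hz; rw [Bf_p] at h2
        have h3 := hFq z hz; rw [Bf_q] at h3
        have h5 : F z 5 = 0 := by linarith
        have h01 : F z 0 + F z 1 = 1 := by linarith
        linear_combination (-1 : ℝ) * h1 + (F z 1 - F z 0) * h01 + (- F z 5) * h5
      have hdiffeq : fderiv ℝ F y V 0 - fderiv ℝ F y V 1 = 0 := by
        have hl : fderiv ℝ (fun w => F w 0 - F w 1) y V =
            fderiv ℝ F y V 0 - fderiv ℝ F y V 1 := by
          rw [fderiv_fun_sub (diff_comp F y (hdF y hy) 0) (diff_comp F y (hdF y hy) 1),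
            ContinuousLinearMap.sub_apply, comp_fd' F y (hdF y hy) 0 V,
            comp_fd' F y (hdF y hy) 1 V]
        have h2' := (diff_comp F y (hdF y hy) 2).hasFDerivAt
        have h3' := (diff_comp F y (hdF y hy) 3).hasFDerivAt
        have h4' := (diff_comp F y (hdF y hy) 4).hasFDerivAt
        have hr := (h2'.mul h2').add (h3'.mul h3') |>.add (h4'.mul h4')
        calc fderiv ℝ F y V 0 - fderiv ℝ F y V 1
            = fderiv ℝ (fun w => F w 0 - F w 1) y V := hl.symm
          _ = fderiv ℝ (fun w => F w 2 * F w 2 + F w 3 * F w 3 + F w 4 * F w 4) y V := by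
              rw [hsq.fderiv_eq]
          _ = 0 := by
              rw [HasFDerivAt.fderiv (f := fun w => F w 2 * F w 2 + F w 3 * F w 3 + F w 4 * F w 4) hr]
              simp only [ContinuousLinearMap.add_apply, ContinuousLinearMap.smul_apply,
                smul_eq_mul]
              rw [comp_fd' F y (hdF y hy) 2 V, comp_fd' F y (hdF y hy) 3 V,
                comp_fd' F y (hdF y hy) 4 V, hw2, hw3, hw4]
              ring
      have hw0 : fderiv ℝ F y V 0 = 0 := by have := hw01 y hy V; linarith
      have hw1 : fderiv ℝ F y V 1 = 0 := by have := hw01 y hy V; linarith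
      have hwz : fderiv ℝ F y V = 0 := by
        funext j; fin_cases j
        · exact hw0
        · exact hw1
        · exact hw2
        · exact hw3
        · exact hw4
        · exact hw5 y hy V
      have hFy0 : F y ≠ 0 := by
        intro h
        have hq := hFq y hy
        rw [h, Bf_q] at hq
        norm_num at hq
      have hrep := fderiv_repr Ω hΩ σ₁ σ₂ F y hy (hd1 y hy) (hd2 y hy) (hdF y hy) hΔ hFmem V
      rw [hwz] at hrep
      have hkey : crC σ₁ σ₂ F y • fderiv ℝ σ₁ y V + crD σ₁ σ₂ F y • fderiv ℝ σ₂ y V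
          = -(fderiv ℝ (crC σ₁ σ₂ F) y V • σ₁ y) - fderiv ℝ (crD σ₁ σ₂ F) y V • σ₂ y := by
        have h := hrep.symm
        linear_combination (norm := module) h
      have hinner : ∀ σ : (ℝ × ℝ) → (Fin 6 → ℝ), ContDiffOn ℝ (⊤ : ℕ∞) σ Ω →
          (∀ z ∈ Ω, σ z ∈ Submodule.span ℝ {σ₁ z, σ₂ z}) →
          σ y ∈ Submodule.span ℝ {F y} →
          fderiv ℝ σ y V ∈ Submodule.span ℝ {σ₁ y, σ₂ y} := by
        intro σ hσs hσspan hσy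
        have hσd : DifferentiableAt ℝ σ y :=
          (hσs.contDiffAt (hΩ.mem_nhds hy)).differentiableAt (by simp)
        have hrepσ := fderiv_repr Ω hΩ σ₁ σ₂ σ y hy (hd1 y hy) (hd2 y hy) hσd hΔ hσspan V
        obtain ⟨t, ht⟩ := Submodule.mem_span_singleton.mp hσy
        have hFyr := repr_lemma σ₁ σ₂ F y (hΔ y hy) (hFmem y hy)
        have hσyr := repr_lemma σ₁ σ₂ σ y (hΔ y hy) (hσspan y hy)
        have hcomb : crC σ₁ σ₂ σ y • σ₁ y + crD σ₁ σ₂ σ y • σ₂ y =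
            (t * crC σ₁ σ₂ F y) • σ₁ y + (t * crD σ₁ σ₂ F y) • σ₂ y := by
          rw [← hσyr, ← ht, hFyr]; module
        obtain ⟨hcc, hdd⟩ := uniq_coeff _ _ (hind y hy) _ _ _ _ hcomb
        rw [hrepσ, hcc, hdd]
        refine Submodule.mem_span_pair.mpr
          ⟨fderiv ℝ (crC σ₁ σ₂ σ) y V - t * fderiv ℝ (crC σ₁ σ₂ F) y V,
           fderiv ℝ (crD σ₁ σ₂ σ) y V - t * fderiv ℝ (crD σ₁ σ₂ F) y V, ?_⟩
        linear_combination (norm := module) (-t) • hkey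
      rcases humb y hy (F y) (hFmem y hy) hFy0 ⟨V, hV0, hinner⟩ with hcase | hcase
      · left
        obtain ⟨s, hs⟩ := Submodule.mem_span_singleton.mp hcase
        have hFyr := repr_lemma σ₁ σ₂ F y (hΔ y hy) (hFmem y hy)
        have hcomb : s • σ₁ y + (0:ℝ) • σ₂ y = crC σ₁ σ₂ F y • σ₁ y + crD σ₁ σ₂ F y • σ₂ y := by
          rw [zero_smul, add_zero, hs, ← hFyr]
        obtain ⟨_, hdd⟩ := uniq_coeff _ _ (hind y hy) _ _ _ _ hcomb
        have h0 : -Bf (σ₁ y) pvec / Dl σ₁ σ₂ y = 0 := by rw [← hB y hy, ← hdd]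
        rcases div_eq_zero_iff.mp h0 with h | h
        · linarith
        · exact absurd h (hΔ y hy)
      · right
        obtain ⟨s, hs⟩ := Submodule.mem_span_singleton.mp hcase
        have hFyr := repr_lemma σ₁ σ₂ F y (hΔ y hy) (hFmem y hy)
        have hcomb : (0:ℝ) • σ₁ y + s • σ₂ y = crC σ₁ σ₂ F y • σ₁ y + crD σ₁ σ₂ F y • σ₂ y := by
          rw [zero_smul, zero_add, hs, ← hFyr]
        obtain ⟨hcc, _⟩ := uniq_coeff _ _ (hind y hy) _ _ _ _ hcomb
        have h0 : Bf (σ₂ y) pvec / Dl σ₁ σ₂ y = 0 := by rw [← hA y hy, ← hcc]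
        rcases div_eq_zero_iff.mp h0 with h | h
        · exact h
        · exact absurd h (hΔ y hy)
    · -- backward direction
      intro hdisj hinj
      rcases hdisj with hp1 | hp2
      · have h0 : fderiv ℝ (euc F) y (X y) = 0 := by
          rw [heuc y hy, ContinuousLinearMap.comp_apply, keyX y hy hp1, map_zero]
        have hX0 : X y ≠ 0 := by
          have := (hXY y hy).ne_zero 0; simpa using this
        exact hX0 (hinj (by rw [h0, map_zero]))
      · have h0 : fderiv ℝ (euc F) y (Y y) = 0 := by
          rw [heuc y hy, ContinuousLinearMap.comp_apply, keyY y hy hp2, map_zero]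
        have hY0 : Y y ≠ 0 := by
          have := (hXY y hy).ne_zero 1; simpa using this
        exact hY0 (hinj (by rw [h0, map_zero]))
  · intro y hy hp1
    rw [heuc y hy, ContinuousLinearMap.comp_apply, keyX y hy hp1, map_zero]
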